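/- arXiv:1901.00156 — 5 statements merged into one kernel-verified Lean document; each statement's English description precedes it below -/
import Mathlib

section
/- For any graph G obtained by splitting a vertex v (with neighborhood covering U₁ ∪ U₂ = N(v)) and then deleting an edge incident to one of the resulting split vertices, the same graph (up to isomorphism fixing all other vertices) can be obtained by first deleting an edge of G (or doing nothing) and then performing a vertex split of v with an appropriately modified covering. -/
/-!
Since `splitRel` reads `G` only on pairs of vertices both different from `v`, deleting
the edge `u v` from `G` does not change any split of `v`; it only shrinks the
neighbourhood to be covered to `N(v) \ {u}`. Deleting the edge `u vᵢ` after the split is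
the split with `u` removed from `Uᵢ`, whose new covering `U₁' ∪ U₂'` lies between
`N(v) \ {u}` and `N(v)`, hence equals one of them: it covers `N(v)` in `G` or in `G - uv`.
-/

/-- The relation underlying an inclusive vertex split of `v` with covering `U₁, U₂`
of `N(v)`.  The split vertices are `v₁ = some v` and `v₂ = none`; every other vertex
`x` of `G` is represented by `some x`. -/
def splitRel {V : Type*} (G : SimpleGraph V) (v : V) (U₁ U₂ : Set V) :
    Option V → Option V → Prop
  | some x, some y => (x ≠ v ∧ y ≠ v ∧ G.Adj x y) ∨ (x = v ∧ y ∈ U₁)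
  | none, some y => y ∈ U₂
  | _, _ => False

/-- The graph obtained from `G` by an inclusive vertex split of `v` with covering
`U₁ ∪ U₂ = N(v)`: remove `v` and add two new non-adjacent vertices `v₁ = some v`
and `v₂ = none` with `N(v₁) = U₁` and `N(v₂) = U₂`. -/
def splitGraph {V : Type*} (G : SimpleGraph V) (v : V) (U₁ U₂ : Set V) :
    SimpleGraph (Option V) :=
  SimpleGraph.fromRel (splitRel G v U₁ U₂)

namespace SimpleGraph

variable {V : Type*} (G : SimpleGraph V) (u v : V) (U₁ U₂ : Set V)

lemma neighborSet_deleteEdges_pair :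
    (G.deleteEdges {s(u, v)}).neighborSet v = G.neighborSet v \ {u} := by
  ext x
  have hloop : G.Adj v x → x ≠ v := fun h => h.ne'
  simp only [mem_neighborSet, deleteEdges_adj, Set.mem_singleton_iff, Set.mem_sdiff,
    Sym2.eq_iff]
  grind

lemma splitGraph_deleteEdges_pair :
    splitGraph (G.deleteEdges {s(u, v)}) v U₁ U₂ = splitGraph G v U₁ U₂ := by
  ext (_ | x) (_ | y) <;>
    simp only [splitGraph, splitRel, fromRel_adj, deleteEdges_adj, Set.mem_singleton_iff,
      Sym2.eq_iff]
  grind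

lemma splitGraph_deleteEdges_some :
    (splitGraph G v U₁ U₂).deleteEdges {s(some u, some v)} =
      splitGraph G v (U₁ \ {u}) U₂ := by
  ext (_ | x) (_ | y) <;>
    simp only [splitGraph, splitRel, fromRel_adj, deleteEdges_adj, Set.mem_singleton_iff,
      Set.mem_sdiff, Sym2.eq_iff, Option.some.injEq]
  all_goals grind

lemma splitGraph_deleteEdges_none :
    (splitGraph G v U₁ U₂).deleteEdges {s(some u, none)} =
      splitGraph G v U₁ (U₂ \ {u}) := by
  ext (_ | x) (_ | y) <;>
    simp only [splitGraph, splitRel, fromRel_adj, deleteEdges_adj, Set.mem_singleton_iff,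
      Set.mem_sdiff, Sym2.eq_iff, Option.some.injEq]
  all_goals grind

variable {G u v U₁ U₂}

lemma exists_splitGraph_eq_of_diff_subset_of_subset
    (hsub : G.neighborSet v \ {u} ⊆ U₁ ∪ U₂) (hsup : U₁ ∪ U₂ ⊆ G.neighborSet v) :
    ∃ H : SimpleGraph V, (H = G ∨ H = G.deleteEdges {s(u, v)}) ∧
      U₁ ∪ U₂ = H.neighborSet v ∧ splitGraph G v U₁ U₂ = splitGraph H v U₁ U₂ := by
  rcases (Set.sdiff_singleton_wcovBy _ u).eq_or_eq hsub hsup with hcov | hcov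
  · refine ⟨G.deleteEdges {s(u, v)}, Or.inr rfl, ?_, (splitGraph_deleteEdges_pair ..).symm⟩
    rw [hcov, neighborSet_deleteEdges_pair]
  · exact ⟨G, Or.inl rfl, hcov, rfl⟩

end SimpleGraph

/-- A vertex split of `v` followed by the deletion of an edge `u w` incident to one of
the resulting split vertices `w` (so `w = some v` with `u ∈ U₁`, or `w = none` with
`u ∈ U₂`) yields the same graph as first deleting an edge of `G` (or doing nothing)
and then splitting `v` with an appropriately modified covering. -/
theorem split_then_delete_swap {V : Type*} (G : SimpleGraph V) (v u : V)
    (U₁ U₂ : Set V) (hcov : U₁ ∪ U₂ = G.neighborSet v) (w : Option V)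
    (hw : (w = some v ∧ u ∈ U₁) ∨ (w = none ∧ u ∈ U₂)) :
    ∃ (H : SimpleGraph V) (U₁' U₂' : Set V),
      (H = G ∨ H = G.deleteEdges {s(u, v)}) ∧
      U₁' ∪ U₂' = H.neighborSet v ∧
      (splitGraph G v U₁ U₂).deleteEdges {s(some u, w)} = splitGraph H v U₁' U₂' := by
  rcases hw with ⟨rfl, -⟩ | ⟨rfl, -⟩
  · obtain ⟨H, hH, hcovH, hsplit⟩ := SimpleGraph.exists_splitGraph_eq_of_diff_subset_of_subset
      (u := u) (U₁ := U₁ \ {u}) (U₂ := U₂) (by rw [← hcov]; grind)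
      (hcov ▸ Set.union_subset_union_left U₂ Set.sdiff_subset)
    exact ⟨H, _, _, hH, hcovH, (SimpleGraph.splitGraph_deleteEdges_some ..).trans hsplit⟩
  · obtain ⟨H, hH, hcovH, hsplit⟩ := SimpleGraph.exists_splitGraph_eq_of_diff_subset_of_subset
      (u := u) (U₁ := U₁) (U₂ := U₂ \ {u}) (by rw [← hcov]; grind)
      (hcov ▸ Set.union_subset_union_right U₁ Set.sdiff_subset)
    exact ⟨H, _, _, hH, hcovH, (SimpleGraph.splitGraph_deleteEdges_none ..).trans hsplit⟩
end

section
/- For any graph G, a vertex split of v followed by adding an edge incident to one of the resulting vertices produces a graph that equals (up to isomorphism fixing other vertices) the result of first adding the corresponding edge at v (or doing nothing if it exists) and then splitting v with an enlarged covering. -/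
namespace SimpleGraph

variable {V : Type*} {G : SimpleGraph V} {v u : V} {U₁ U₂ : Set V}

/- Adding `u v` to `G` changes no adjacency between vertices other than `v`, so after the
split it only shows up as the new neighbour `u` of whichever split vertex receives it. -/
theorem splitGraph_sup_edge_some :
    splitGraph G v U₁ U₂ ⊔ edge (some u) (some v) =
      splitGraph (G ⊔ edge u v) v (insert u U₁) U₂ := by
  ext (_ | x) (_ | y) <;> grind [splitGraph, splitRel, fromRel_adj]

theorem splitGraph_sup_edge_none :
    splitGraph G v U₁ U₂ ⊔ edge (some u) none =
      splitGraph (G ⊔ edge u v) v U₁ (insert u U₂) := by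
  ext (_ | x) (_ | y) <;> grind [splitGraph, splitRel, fromRel_adj]

theorem neighborSet_sup_edge (huv : u ≠ v) :
    (G ⊔ edge u v).neighborSet v = insert u (G.neighborSet v) := by
  ext x
  grind [mem_neighborSet]

end SimpleGraph

open SimpleGraph in
/-- A vertex split of `v` followed by the addition of an edge between `u` and one of
the resulting split vertices `w` (so `w = some v` with `u ∉ U₁`, or `w = none` with
`u ∉ U₂`) yields the same graph as first adding the corresponding edge `u v` to `G`
(or doing nothing if it already exists) and then splitting `v` with an enlarged
covering. -/
theorem split_then_add_swap {V : Type*} (G : SimpleGraph V) (v u : V)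
    (U₁ U₂ : Set V) (hcov : U₁ ∪ U₂ = G.neighborSet v) (huv : u ≠ v) (w : Option V)
    (hw : (w = some v ∧ u ∉ U₁) ∨ (w = none ∧ u ∉ U₂)) :
    ∃ (H : SimpleGraph V) (U₁' U₂' : Set V),
      (H = G ∨ H = G ⊔ SimpleGraph.fromEdgeSet {s(u, v)}) ∧
      U₁' ∪ U₂' = H.neighborSet v ∧
      (splitGraph G v U₁ U₂) ⊔ SimpleGraph.fromEdgeSet {s(some u, w)} =
        splitGraph H v U₁' U₂' := by
  have hnbr : (G ⊔ edge u v).neighborSet v = insert u (U₁ ∪ U₂) := by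
    rw [neighborSet_sup_edge huv, hcov]
  rcases hw with ⟨rfl, -⟩ | ⟨rfl, -⟩
  · exact ⟨G ⊔ edge u v, insert u U₁, U₂, Or.inr rfl, by rw [hnbr, Set.insert_union],
      splitGraph_sup_edge_some⟩
  · exact ⟨G ⊔ edge u v, U₁, insert u U₂, Or.inr rfl, by rw [hnbr, Set.union_insert],
      splitGraph_sup_edge_none⟩
end

section
/- If (G, k) is a yes-instance of Cluster Editing with Vertex Splitting, then the critical clique graph CC(G) has at most 4k non-isolated vertices, every connected component of CC(G) has at most 3k+1 vertices, and CC(G) has at most k connected components that are not isolated vertices. -/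
open scoped Classical

/-- The cluster graph determined by a covering `C` of the vertex set: two distinct
vertices are adjacent iff they lie in a common set of `C`. -/
def clusterGraphOf {V : Type*} (C : Finset (Finset V)) : SimpleGraph V :=
  SimpleGraph.fromRel (fun u v => ∃ S ∈ C, u ∈ S ∧ v ∈ S)

/-- The number of vertex splittings needed to realize the covering `C`: a vertex
occurring in `m` clusters must be split `m - 1` times. -/
noncomputable def splitCost {V : Type*} [Fintype V] (C : Finset (Finset V)) : ℕ :=
  ∑ v : V, ((C.filter (fun S => v ∈ S)).card - 1)

/-- The number of edges on which two graphs differ. -/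
noncomputable def editDiff {V : Type*} [Fintype V] (G H : SimpleGraph V) : ℕ :=
  (Finset.univ.filter (fun e : Sym2 V =>
    (e ∈ G.edgeSet ∧ e ∉ H.edgeSet) ∨ (e ∉ G.edgeSet ∧ e ∈ H.edgeSet))).card

/-- The minimum number of edit operations (edge additions, edge deletions and
inclusive vertex splits) of a solution of CEVS represented by the covering `C`. -/
noncomputable def cevsCost {V : Type*} [Fintype V] (G : SimpleGraph V)
    (C : Finset (Finset V)) : ℕ :=
  splitCost C + editDiff G (clusterGraphOf C)

/-- `C` is a covering of the vertex set. -/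
def IsCovering {V : Type*} (C : Finset (Finset V)) : Prop :=
  ∀ v : V, ∃ S ∈ C, v ∈ S

/-- `(G, k)` is a yes-instance of Cluster Editing with Vertex Splitting: some
covering of the vertex set (representing the clusters of the final cluster graph,
each set being the original vertices corresponding to one final clique) has edit
cost at most `k`. -/
noncomputable def CEVS {V : Type*} [Fintype V] (G : SimpleGraph V) (k : ℕ) : Prop :=
  ∃ C : Finset (Finset V), IsCovering C ∧ cevsCost G C ≤ k

/-- `C` is an optimal solution of CEVS on `G`: a covering of minimum edit cost. -/
noncomputable def IsOptimalSolution {V : Type*} [Fintype V] (G : SimpleGraph V)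
    (C : Finset (Finset V)) : Prop :=
  IsCovering C ∧ ∀ C' : Finset (Finset V), IsCovering C' → cevsCost G C ≤ cevsCost G C'

/-- Vertices with equal closed neighborhoods; the equivalence classes are the
critical cliques of `G`. -/
def ccSetoid {V : Type*} (G : SimpleGraph V) : Setoid V :=
  ⟨fun u v => insert u (G.neighborSet u) = insert v (G.neighborSet v),
    fun _ => rfl, Eq.symm, Eq.trans⟩

/-- The critical clique graph `CC(G)`: its vertices are the critical cliques of `G`,
two being adjacent iff some (equivalently, every) pair of representatives is
adjacent in `G`. -/
def ccGraph {V : Type*} (G : SimpleGraph V) : SimpleGraph (Quotient (ccSetoid G)) :=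
  SimpleGraph.fromRel (fun a b =>
    ∃ u v : V, Quotient.mk (ccSetoid G) u = a ∧ Quotient.mk (ccSetoid G) v = b ∧ G.Adj u v)

/-!
Fix a covering `C` of cost at most `k`, with `s` splits and a set `E` of edited pairs, and call a
vertex touched if it is split or lies on an edited pair; there are at most `s + 2|E|` of them.
The closed neighbourhood of an untouched vertex is its unique cluster, so critical cliques made of
untouched vertices inject into clusters. A non-isolated one has a touched vertex in its cluster
(an untouched neighbour would lie in the same critical clique), which gives the bound `4k`.

For a component `K` of `CC(G)`, the vertices of `K` and the clusters meeting `K`, joined along the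
edited pairs inside `K` and along incidences, form a connected graph; counting its edges bounds the
clusters meeting `K` by `|E_K| + s_K + 1`, which gives `3k + 1`. When `|E_K| + s_K = 0`, `K` lies
in one cluster, is a clique of `G` and so a single critical clique: every non-trivial component
spends its own unit of the budget.
-/

open Finset SimpleGraph

theorem SimpleGraph.Connected.card_le_card_add_one_of_edgeSet_subset_range {α β : Type*}
    [Finite β] {Γ : SimpleGraph α} (hΓ : Γ.Connected) {f : β → Sym2 α}
    (hf : Γ.edgeSet ⊆ Set.range f) : Nat.card α ≤ Nat.card β + 1 :=
  hΓ.card_vert_le_card_edgeSet_add_one.trans <| Nat.add_le_add_right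
    ((Nat.card_mono (Set.finite_range f) hf).trans (Finite.card_range_le f)) 1

theorem Finset.sum_le_sum_tsub_one_add_card {ι : Type*} (s : Finset ι) (f : ι → ℕ) :
    ∑ i ∈ s, f i ≤ ∑ i ∈ s, (f i - 1) + #s := by
  rw [card_eq_sum_ones, ← sum_add_distrib]
  exact sum_le_sum fun i _ => by omega

theorem Finset.sum_card_inter_sym2_fiber_le {α β : Type*} [Fintype α] [Fintype β]
    [DecidableEq β] (s : Finset (Sym2 α)) (g : α → β) :
    ∑ b, #(s ∩ ({a | g a = b} : Finset α).sym2) ≤ #s := by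
  rw [card_eq_sum_card_fiberwise (f := fun e => g e.out.1) (t := univ) fun _ _ => mem_univ _]
  refine sum_le_sum fun b _ => card_le_card fun e he => ?_
  obtain ⟨hs, hsym⟩ := mem_inter.mp he
  exact mem_filter.mpr ⟨hs, by simpa using mem_sym2_iff.mp hsym _ (Sym2.out_fst_mem e)⟩

theorem Finset.card_sym2_subtype_le_card_inter_sym2 {V : Type*} (W : Finset V)
    (E : Finset (Sym2 V)) : Nat.card {e : Sym2 W // e.map (↑) ∈ E} ≤ #(E ∩ W.sym2) := by
  let g (e : {e : Sym2 W // e.map (↑) ∈ E}) : ↥(E ∩ W.sym2) :=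
    ⟨e.1.map (↑), mem_inter.mpr ⟨e.2, mem_sym2_iff.mpr fun v hv => by
      obtain ⟨w, -, rfl⟩ := Sym2.mem_map.mp hv
      exact w.2⟩⟩
  have hg : Function.Injective g := fun e e' h =>
    Subtype.ext (Sym2.map.injective Subtype.val_injective (congrArg Subtype.val h))
  exact (Nat.card_le_card_of_injective g hg).trans_eq (Nat.card_eq_finsetCard _)

namespace CEVS

variable {V : Type*}

theorem adj_clusterGraphOf_iff {C : Finset (Finset V)} {u v : V} :
    (clusterGraphOf C).Adj u v ↔ u ≠ v ∧ ∃ S ∈ C, u ∈ S ∧ v ∈ S := by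
  simp only [clusterGraphOf, fromRel_adj]
  constructor
  · rintro ⟨hne, ⟨S, hS, hu, hv⟩ | ⟨S, hS, hv, hu⟩⟩ <;> exact ⟨hne, S, hS, hu, hv⟩
  · rintro ⟨hne, h⟩
    exact ⟨hne, Or.inl h⟩

theorem adj_ccGraph_iff {G : SimpleGraph V} {a b : Quotient (ccSetoid G)} :
    (ccGraph G).Adj a b ↔ a ≠ b ∧ ∃ u v, ⟦u⟧ = a ∧ ⟦v⟧ = b ∧ G.Adj u v := by
  simp only [ccGraph, fromRel_adj]
  constructor
  · rintro ⟨hne, ⟨u, v, hu, hv, huv⟩ | ⟨v, u, hv, hu, hvu⟩⟩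
    · exact ⟨hne, u, v, hu, hv, huv⟩
    · exact ⟨hne, u, v, hu, hv, hvu.symm⟩
  · rintro ⟨hne, h⟩
    exact ⟨hne, Or.inl h⟩

theorem reachable_of_mk_eq_mk {G : SimpleGraph V} {u v : V}
    (h : (⟦u⟧ : Quotient (ccSetoid G)) = ⟦v⟧) : G.Reachable u v := by
  have hv : v ∈ insert u (G.neighborSet u) := (Quotient.exact h : _ = _) ▸ Set.mem_insert v _
  rcases hv with rfl | huv
  · rfl
  · exact Adj.reachable huv

theorem ccGraph_reachable_mk_iff {G : SimpleGraph V} {u v : V} :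
    (ccGraph G).Reachable ⟦u⟧ ⟦v⟧ ↔ G.Reachable u v := by
  constructor
  · let f : Quotient (ccSetoid G) → G.ConnectedComponent :=
      Quotient.lift G.connectedComponentMk fun _ _ h =>
        ConnectedComponent.sound (reachable_of_mk_eq_mk (Quotient.sound h))
    have hf {a b} (hab : (ccGraph G).Adj a b) : f a = f b := by
      obtain ⟨-, u, v, rfl, rfl, huv⟩ := adj_ccGraph_iff.mp hab
      exact ConnectedComponent.connectedComponentMk_eq_of_adj huv
    rintro ⟨p⟩
    suffices ∀ a b, (ccGraph G).Walk a b → f a = f b from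
      ConnectedComponent.exact (this _ _ p)
    intro a b q
    induction q with
    | nil => rfl
    | cons hab _ ih => exact (hf hab).trans ih
  · rintro ⟨p⟩
    induction p with
    | nil => rfl
    | @cons u w v huw _ ih =>
      refine Reachable.trans ?_ ih
      by_cases h : (⟦u⟧ : Quotient (ccSetoid G)) = ⟦w⟧
      · rw [h]
      · exact Adj.reachable (adj_ccGraph_iff.mpr ⟨h, u, w, rfl, rfl, huw⟩)

theorem connectedComponentMk_mk_eq_of_adj {G : SimpleGraph V} {u v : V} (huv : G.Adj u v) :
    (ccGraph G).connectedComponentMk ⟦u⟧ = (ccGraph G).connectedComponentMk ⟦v⟧ :=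
  ConnectedComponent.sound (ccGraph_reachable_mk_iff.mpr huv.reachable)

noncomputable def clustersAt (C : Finset (Finset V)) (v : V) : Finset (Finset V) :=
  {S ∈ C | v ∈ S}

theorem card_incidences_le {C 𝒮 : Finset (Finset V)} (W : Finset V) (h𝒮 : 𝒮 ⊆ C) :
    Nat.card {p : W × 𝒮 // p.1.1 ∈ p.2.1} ≤ ∑ v ∈ W, #(clustersAt C v) := by
  let g (p : {p : W × 𝒮 // p.1.1 ∈ p.2.1}) : ↥(W.sigma (clustersAt C)) :=
    ⟨⟨p.1.1, p.1.2⟩, mem_sigma.mpr ⟨p.1.1.2, mem_filter.mpr ⟨h𝒮 p.1.2.2, p.2⟩⟩⟩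
  have hg : Function.Injective g := fun p q h => by
    simp only [g, Subtype.mk.injEq, Sigma.mk.injEq, heq_eq_eq] at h
    exact Subtype.ext (Prod.ext (Subtype.ext h.1) (Subtype.ext h.2))
  exact (Nat.card_le_card_of_injective g hg).trans_eq
    ((Nat.card_eq_finsetCard _).trans (card_sigma _ _))

noncomputable def clustersMeeting (C : Finset (Finset V)) (W : Finset V) : Finset (Finset V) :=
  {S ∈ C | ∃ v ∈ W, v ∈ S}

theorem card_clustersMeeting_le (C : Finset (Finset V)) (W : Finset V) :
    #(clustersMeeting C W) ≤ ∑ v ∈ W, (#(clustersAt C v) - 1) + #W := by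
  have hsub : clustersMeeting C W ⊆ W.biUnion (clustersAt C) := by
    intro S hS
    obtain ⟨hSC, v, hvW, hvS⟩ := mem_filter.mp hS
    exact mem_biUnion.mpr ⟨v, hvW, mem_filter.mpr ⟨hSC, hvS⟩⟩
  exact (card_le_card hsub).trans (card_biUnion_le.trans (sum_le_sum_tsub_one_add_card _ _))

section Finite

variable [Fintype V]

noncomputable def closedNbhd (G : SimpleGraph V) (u : V) : Finset V :=
  {w | w = u ∨ G.Adj u w}

theorem mk_eq_mk_iff_closedNbhd_eq {G : SimpleGraph V} {u v : V} :
    (⟦u⟧ : Quotient (ccSetoid G)) = ⟦v⟧ ↔ closedNbhd G u = closedNbhd G v := by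
  rw [Quotient.eq, ← Finset.coe_inj]
  change insert u (G.neighborSet u) = insert v (G.neighborSet v) ↔ _
  have (x : V) : (closedNbhd G x : Set V) = insert x (G.neighborSet x) := by
    ext; simp [closedNbhd]
  rw [this, this]

theorem closedNbhd_out_injective (G : SimpleGraph V) :
    Function.Injective fun a : Quotient (ccSetoid G) => closedNbhd G a.out := by
  intro a b h
  simpa using mk_eq_mk_iff_closedNbhd_eq.mpr h

noncomputable def editSet (G H : SimpleGraph V) : Finset (Sym2 V) :=
  {e | (e ∈ G.edgeSet ∧ e ∉ H.edgeSet) ∨ (e ∉ G.edgeSet ∧ e ∈ H.edgeSet)}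

theorem cevsCost_eq (G : SimpleGraph V) (C : Finset (Finset V)) :
    cevsCost G C = ∑ v, (#(clustersAt C v) - 1) + #(editSet G (clusterGraphOf C)) :=
  rfl

theorem adj_iff_adj_of_notMem_editSet {G H : SimpleGraph V} {u v : V}
    (h : s(u, v) ∉ editSet G H) : G.Adj u v ↔ H.Adj u v := by
  simp only [editSet, mem_filter, mem_univ, true_and, mem_edgeSet] at h
  tauto

variable {G : SimpleGraph V} {C : Finset (Finset V)}

theorem card_clustersMeeting_le_of_connected (W : Finset V)
    (hW : (G.induce (W : Set V)).Connected) :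
    #(clustersMeeting C W) ≤ #(editSet G (clusterGraphOf C) ∩ W.sym2) +
      ∑ v ∈ W, (#(clustersAt C v) - 1) + 1 := by
  set E := editSet G (clusterGraphOf C)
  set SC := clustersMeeting C W
  -- `Δ` joins two vertices of `W` along each edited pair and a vertex to each cluster containing it
  let f : {e : Sym2 W // e.map (↑) ∈ E} ⊕ {p : W × SC // p.1.1 ∈ p.2.1} → Sym2 (W ⊕ SC) :=
    Sum.elim (fun e => e.1.map Sum.inl) (fun p => s(.inl p.1.1, .inr p.1.2))
  let Δ := fromEdgeSet (Set.range f)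
  have hinc (v : W) (S : SC) (h : v.1 ∈ S.1) : Δ.Adj (.inl v) (.inr S) :=
    ⟨⟨.inr ⟨(v, S), h⟩, rfl⟩, Sum.inl_ne_inr⟩
  have hstep (u v : W) (huv : G.Adj u v) : Δ.Reachable (.inl u) (.inl v) := by
    by_cases he : s(u.1, v.1) ∈ E
    · refine Adj.reachable ⟨⟨.inl ⟨s(u, v), he⟩, rfl⟩, ?_⟩
      exact fun h => huv.ne (congrArg Subtype.val (Sum.inl_injective h))
    · obtain ⟨-, S, hS, huS, hvS⟩ :=
        adj_clusterGraphOf_iff.mp ((adj_iff_adj_of_notMem_editSet he).mp huv)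
      let S' : SC := ⟨S, mem_filter.mpr ⟨hS, u, u.2, huS⟩⟩
      exact (hinc u S' huS).reachable.trans (hinc v S' hvS).symm.reachable
  have hconn : Δ.Connected := by
    obtain ⟨u₀⟩ := hW.nonempty
    have hW' (v : W) : Δ.Reachable (.inl u₀) (.inl v) := by
      obtain ⟨p⟩ := hW.preconnected u₀ v
      induction p with
      | nil => rfl
      | cons h _ ih => exact (hstep _ _ h).trans ih
    refine (connected_iff_exists_forall_reachable Δ).mpr ⟨.inl u₀, ?_⟩
    rintro (v | S)
    · exact hW' v
    · obtain ⟨v, hvW, hvS⟩ := (mem_filter.mp S.2).2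
      exact (hW' ⟨v, hvW⟩).trans (hinc _ S hvS).reachable
  have hcard := hconn.card_le_card_add_one_of_edgeSet_subset_range
    (by simp only [Δ, edgeSet_fromEdgeSet]; exact Set.sdiff_subset)
  have hedit := card_sym2_subtype_le_card_inter_sym2 W E
  have hincid : Nat.card {p : W × SC // p.1.1 ∈ p.2.1} ≤ ∑ v ∈ W, #(clustersAt C v) :=
    card_incidences_le W (filter_subset _ C)
  have hsum := sum_le_sum_tsub_one_add_card W (fun v => #(clustersAt C v))
  rw [Nat.card_sum, Nat.card_sum, Nat.card_eq_finsetCard, Nat.card_eq_finsetCard] at hcard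
  omega

def IsUntouched (G : SimpleGraph V) (C : Finset (Finset V)) (v : V) : Prop :=
  #(clustersAt C v) ≤ 1 ∧ ∀ w, s(v, w) ∉ editSet G (clusterGraphOf C)

theorem closedNbhd_eq_of_isUntouched {u : V} {S : Finset V} (hu : IsUntouched G C u)
    (hS : S ∈ C) (huS : u ∈ S) : closedNbhd G u = S := by
  ext w
  simp only [closedNbhd, mem_filter, mem_univ, true_and]
  rw [adj_iff_adj_of_notMem_editSet (hu.2 w), adj_clusterGraphOf_iff]
  constructor
  · rintro (rfl | ⟨-, T, hT, huT, hwT⟩)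
    · exact huS
    · have : T = S := card_le_one.mp hu.1 T (by simp [clustersAt, hT, huT]) S
        (by simp [clustersAt, hS, huS])
      exact this ▸ hwT
  · intro hwS
    by_cases hwu : w = u
    · exact Or.inl hwu
    · exact Or.inr ⟨Ne.symm hwu, S, hS, huS, hwS⟩

theorem mk_eq_mk_of_adj_of_isUntouched (hC : IsCovering C) {u v : V}
    (hu : IsUntouched G C u) (hv : IsUntouched G C v) (huv : G.Adj u v) :
    (⟦u⟧ : Quotient (ccSetoid G)) = ⟦v⟧ := by
  obtain ⟨S, hS, huS⟩ := hC u
  have hNu := closedNbhd_eq_of_isUntouched hu hS huS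
  have hvS : v ∈ S := by simp [← hNu, closedNbhd, huv]
  rw [mk_eq_mk_iff_closedNbhd_eq, hNu, closedNbhd_eq_of_isUntouched hv hS hvS]

theorem card_filter_not_isUntouched_le (W : Finset V) :
    #{v ∈ W | ¬IsUntouched G C v} ≤ ∑ v ∈ W, (#(clustersAt C v) - 1) +
      2 * #(editSet G (clusterGraphOf C)) := by
  set E := editSet G (clusterGraphOf C)
  have hsub : {v ∈ W | ¬IsUntouched G C v} ⊆
      {v ∈ W | 2 ≤ #(clustersAt C v)} ∪ E.biUnion Sym2.toFinset := by
    intro v hv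
    simp only [IsUntouched, not_and_or, not_le, not_forall, not_not, mem_filter] at hv
    obtain ⟨hvW, hsplit | ⟨w, hw⟩⟩ := hv
    · exact mem_union_left _ (mem_filter.mpr ⟨hvW, hsplit⟩)
    · exact mem_union_right _ (mem_biUnion.mpr ⟨s(v, w), hw, by simp⟩)
  have hsplit : #{v ∈ W | 2 ≤ #(clustersAt C v)} ≤ ∑ v ∈ W, (#(clustersAt C v) - 1) :=
    calc #{v ∈ W | 2 ≤ #(clustersAt C v)}
        = ∑ v ∈ W with 2 ≤ #(clustersAt C v), 1 := card_eq_sum_ones _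
      _ ≤ ∑ v ∈ W with 2 ≤ #(clustersAt C v), (#(clustersAt C v) - 1) :=
          sum_le_sum fun v hv => by have := (mem_filter.mp hv).2; omega
      _ ≤ ∑ v ∈ W, (#(clustersAt C v) - 1) := sum_le_sum_of_subset (filter_subset _ _)
  have hedited : #(E.biUnion Sym2.toFinset) ≤ #E * 2 :=
    card_biUnion_le_card_mul _ _ _ fun e _ => by rw [Sym2.card_toFinset]; split_ifs <;> omega
  calc _ ≤ _ := card_le_card hsub
    _ ≤ _ := card_union_le _ _
    _ ≤ _ := by omega

theorem card_le_card_touched_add_card (A : Finset (Quotient (ccSetoid G)))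
    (𝒮 : Finset (Finset V))
    (h𝒮 : ∀ a ∈ A, (∀ u, ⟦u⟧ = a → IsUntouched G C u) → closedNbhd G a.out ∈ 𝒮) :
    #A ≤ #{v | ⟦v⟧ ∈ A ∧ ¬IsUntouched G C v} + #𝒮 := by
  rw [← card_filter_add_card_filter_not (s := A) (fun a => ∃ u, ⟦u⟧ = a ∧ ¬IsUntouched G C u)]
  gcongr
  · refine card_le_card_of_surjOn (fun v => ⟦v⟧) fun a ha => ?_
    obtain ⟨haA, u, rfl, hu⟩ := mem_filter.mp ha
    exact ⟨u, mem_filter.mpr ⟨mem_univ u, haA, hu⟩, rfl⟩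
  · refine card_le_card_of_injOn (fun a => closedNbhd G a.out) (fun a ha => ?_)
      (closedNbhd_out_injective G).injOn
    obtain ⟨haA, ha⟩ := mem_filter.mp ha
    simp only [not_exists, not_and, not_not] at ha
    exact h𝒮 a haA ha

theorem card_nonisolated_le (hC : IsCovering C) :
    #{a : Quotient (ccSetoid G) | ∃ b, (ccGraph G).Adj a b} ≤
      3 * ∑ v, (#(clustersAt C v) - 1) + 4 * #(editSet G (clusterGraphOf C)) := by
  set T : Finset V := {v | ¬IsUntouched G C v}
  have h𝒮 : ∀ a ∈ ({a | ∃ b, (ccGraph G).Adj a b} : Finset _),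
      (∀ u, ⟦u⟧ = a → IsUntouched G C u) → closedNbhd G a.out ∈ clustersMeeting C T := by
    intro a ha hunt
    obtain ⟨b, hab⟩ := (mem_filter.mp ha).2
    obtain ⟨hne, u, v, rfl, rfl, huv⟩ := adj_ccGraph_iff.mp hab
    have hu := hunt u rfl
    obtain ⟨S, hS, huS⟩ := hC u
    have hNu := closedNbhd_eq_of_isUntouched hu hS huS
    have hvS : v ∈ S := by simp [← hNu, closedNbhd, huv]
    -- `v` is touched, for otherwise it would lie in the critical clique of `u`
    have hv : v ∈ T := by
      simpa [T] using fun hv => hne (mk_eq_mk_of_adj_of_isUntouched hC hu hv huv)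
    rw [mk_eq_mk_iff_closedNbhd_eq.mp (Quotient.out_eq _), hNu]
    exact mem_filter.mpr ⟨hS, v, hv, hvS⟩
  have hA := card_le_card_touched_add_card _ _ h𝒮
  have hTA : #{v | ⟦v⟧ ∈ ({a | ∃ b, (ccGraph G).Adj a b} : Finset _) ∧ ¬IsUntouched G C v}
      ≤ #T := card_le_card fun v hv => by simp_all [T]
  have hT : #T ≤ ∑ v, (#(clustersAt C v) - 1) + 2 * #(editSet G (clusterGraphOf C)) :=
    card_filter_not_isUntouched_le univ
  have hS := card_clustersMeeting_le C T
  have hsplit := sum_le_sum_of_subset (f := fun v => #(clustersAt C v) - 1) (subset_univ T)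
  omega

noncomputable def ccComponentVerts (c : (ccGraph G).ConnectedComponent) : Finset V :=
  {v | (ccGraph G).connectedComponentMk ⟦v⟧ = c}

theorem mem_ccComponentVerts {c : (ccGraph G).ConnectedComponent} {v : V} :
    v ∈ ccComponentVerts c ↔ (ccGraph G).connectedComponentMk ⟦v⟧ = c := by
  simp [ccComponentVerts]

theorem connected_induce_ccComponentVerts (c : (ccGraph G).ConnectedComponent) :
    (G.induce (ccComponentVerts c : Set V)).Connected := by
  induction c using ConnectedComponent.ind with | _ a
  induction a using Quotient.ind with | _ u
  have hW : (ccComponentVerts ((ccGraph G).connectedComponentMk ⟦u⟧) : Set V) =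
      (G.connectedComponentMk u).supp := by
    ext v
    simp [mem_ccComponentVerts, ConnectedComponent.eq, ccGraph_reachable_mk_iff]
  rw [hW]
  exact (G.connectedComponentMk u).connected_toSimpleGraph

theorem card_ccComponent_le (hC : IsCovering C) (c : (ccGraph G).ConnectedComponent) :
    #{a | (ccGraph G).connectedComponentMk a = c} ≤
      2 * ∑ v, (#(clustersAt C v) - 1) + 3 * #(editSet G (clusterGraphOf C)) + 1 := by
  set W := ccComponentVerts c
  have h𝒮 : ∀ a ∈ ({a | (ccGraph G).connectedComponentMk a = c} : Finset _),
      (∀ u, ⟦u⟧ = a → IsUntouched G C u) → closedNbhd G a.out ∈ clustersMeeting C W := by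
    intro a ha hunt
    obtain ⟨S, hS, hS'⟩ := hC a.out
    rw [closedNbhd_eq_of_isUntouched (hunt a.out (Quotient.out_eq a)) hS hS']
    exact mem_filter.mpr ⟨hS, a.out, by simpa [W, mem_ccComponentVerts] using ha, hS'⟩
  have hA := card_le_card_touched_add_card _ _ h𝒮
  have hTA : #{v | ⟦v⟧ ∈ ({a | (ccGraph G).connectedComponentMk a = c} : Finset _) ∧
      ¬IsUntouched G C v} = #{v ∈ W | ¬IsUntouched G C v} := by
    congr 1
    ext v
    simp [W, mem_ccComponentVerts]
  have hT := card_filter_not_isUntouched_le (G := G) (C := C) W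
  have hS := card_clustersMeeting_le_of_connected (C := C) W (connected_induce_ccComponentVerts c)
  have hEI := card_le_card (inter_subset_left (s₁ := editSet G (clusterGraphOf C)) (s₂ := W.sym2))
  have hsplit := sum_le_sum_of_subset (f := fun v => #(clustersAt C v) - 1) (subset_univ W)
  omega

theorem mk_eq_mk_of_card_clustersMeeting_le_one (hC : IsCovering C) (W : Finset V)
    (hW : ∀ u ∈ W, ∀ v, G.Adj u v → v ∈ W)
    (hE : Disjoint (editSet G (clusterGraphOf C)) W.sym2)
    (hS : #(clustersMeeting C W) ≤ 1) {u v : V} (hu : u ∈ W) (hv : v ∈ W) :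
    (⟦u⟧ : Quotient (ccSetoid G)) = ⟦v⟧ := by
  suffices hN : ∀ u ∈ W, closedNbhd G u = W by
    rw [mk_eq_mk_iff_closedNbhd_eq, hN u hu, hN v hv]
  intro u hu
  ext w
  simp only [closedNbhd, mem_filter, mem_univ, true_and]
  refine ⟨fun h => h.elim (· ▸ hu) (hW u hu w), fun hw => or_iff_not_imp_left.mpr fun hwu => ?_⟩
  obtain ⟨S, hSC, huS⟩ := hC u
  obtain ⟨T, hTC, hwT⟩ := hC w
  obtain rfl : S = T := card_le_one.mp hS S (mem_filter.mpr ⟨hSC, u, hu, huS⟩) T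
    (mem_filter.mpr ⟨hTC, w, hw, hwT⟩)
  have huw : s(u, w) ∉ editSet G (clusterGraphOf C) := fun he =>
    disjoint_left.mp hE he (mk_mem_sym2_iff.mpr ⟨hu, hw⟩)
  exact (adj_iff_adj_of_notMem_editSet huw).mpr
    (adj_clusterGraphOf_iff.mpr ⟨Ne.symm hwu, S, hSC, huS, hwT⟩)

theorem one_le_edits_add_splits_of_nontrivial (hC : IsCovering C)
    {c : (ccGraph G).ConnectedComponent}
    (hc : ∃ a b, (ccGraph G).connectedComponentMk a = c ∧ (ccGraph G).Adj a b) :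
    1 ≤ #(editSet G (clusterGraphOf C) ∩ (ccComponentVerts c).sym2) +
      ∑ v ∈ ccComponentVerts c, (#(clustersAt C v) - 1) := by
  set W := ccComponentVerts c
  obtain ⟨_, _, hac, hab⟩ := hc
  obtain ⟨hne, u, v, rfl, rfl, huv⟩ := adj_ccGraph_iff.mp hab
  by_contra! h
  have hS := card_clustersMeeting_le_of_connected (C := C) W (connected_induce_ccComponentVerts c)
  have hE : editSet G (clusterGraphOf C) ∩ W.sym2 = ∅ := card_eq_zero.mp (by omega)
  refine hne (mk_eq_mk_of_card_clustersMeeting_le_one hC W (fun x hx y hxy => ?_)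
    (disjoint_iff_inter_eq_empty.mpr hE) (by omega) (mem_ccComponentVerts.mpr hac)
    (mem_ccComponentVerts.mpr ((connectedComponentMk_mk_eq_of_adj huv).symm.trans hac)))
  exact mem_ccComponentVerts.mpr
    ((connectedComponentMk_mk_eq_of_adj hxy).symm.trans (mem_ccComponentVerts.mp hx))

theorem card_nontrivial_ccComponents_le (hC : IsCovering C) :
    #{c : (ccGraph G).ConnectedComponent |
        ∃ a b, (ccGraph G).connectedComponentMk a = c ∧ (ccGraph G).Adj a b} ≤
      ∑ v, (#(clustersAt C v) - 1) + #(editSet G (clusterGraphOf C)) := by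
  set E := editSet G (clusterGraphOf C)
  let w (c : (ccGraph G).ConnectedComponent) :=
    #(E ∩ (ccComponentVerts c).sym2) + ∑ v ∈ ccComponentVerts c, (#(clustersAt C v) - 1)
  let cc (v : V) := (ccGraph G).connectedComponentMk ⟦v⟧
  calc _ = ∑ c ∈ {c | ∃ a b, (ccGraph G).connectedComponentMk a = c ∧ (ccGraph G).Adj a b}, 1 :=
        card_eq_sum_ones _
    _ ≤ ∑ c ∈ {c | ∃ a b, (ccGraph G).connectedComponentMk a = c ∧ (ccGraph G).Adj a b}, w c :=
        sum_le_sum fun c hc => one_le_edits_add_splits_of_nontrivial hC (mem_filter.mp hc).2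
    _ ≤ ∑ c, w c := sum_le_sum_of_subset (subset_univ _)
    _ = ∑ c, #(E ∩ ({v | cc v = c} : Finset V).sym2) + ∑ v, (#(clustersAt C v) - 1) := by
        rw [sum_add_distrib, ← sum_fiberwise univ cc]
        rfl
    _ ≤ #E + ∑ v, (#(clustersAt C v) - 1) :=
        Nat.add_le_add_right (sum_card_inter_sym2_fiber_le E cc) _
    _ = _ := add_comm _ _

end Finite

end CEVS

/-- If `(G, k)` is a yes-instance of CEVS, then `CC(G)` has at most `4k` non-isolated
vertices, every connected component of `CC(G)` has at most `3k + 1` vertices, and at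
most `k` connected components of `CC(G)` are not isolated vertices. -/
theorem ccGraph_bounds {V : Type*} [Fintype V] (G : SimpleGraph V) (k : ℕ)
    (h : CEVS G k) :
    (Finset.univ.filter (fun a : Quotient (ccSetoid G) =>
        ∃ b, (ccGraph G).Adj a b)).card ≤ 4 * k ∧
    (∀ c : (ccGraph G).ConnectedComponent,
        (Finset.univ.filter (fun a : Quotient (ccSetoid G) =>
          (ccGraph G).connectedComponentMk a = c)).card ≤ 3 * k + 1) ∧
    (Finset.univ.filter (fun c : (ccGraph G).ConnectedComponent =>
        ∃ a b, (ccGraph G).connectedComponentMk a = c ∧ (ccGraph G).Adj a b)).card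
      ≤ k := by
  obtain ⟨C, hC, hk⟩ := h
  rw [CEVS.cevsCost_eq] at hk
  refine ⟨(CEVS.card_nonisolated_le hC).trans (by omega),
    fun c => (CEVS.card_ccComponent_le hC c).trans (by omega),
    (CEVS.card_nontrivial_ccComponents_le hC).trans hk⟩
end

section
/- Removing an isolated clique from an instance of Cluster Editing with Vertex Splitting yields an equivalent instance: (G, k) is a yes-instance iff (G − C, k) is, where C is a connected component of G inducing a complete graph. -/
open scoped Classical

/-!
A covering of `V` restricts to a covering of `sᶜ` of no larger cost: each vertex lies in at
most as many clusters as before, and every edge edited inside `sᶜ` was edited in `V`.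
Conversely, adding `s` as one more cluster to a covering of `sᶜ` costs nothing extra:
the vertices of `s` lie in that cluster only, and since `s` is a clique with no edge leaving
it, `G` and the new cluster graph agree on every pair meeting `s`.
-/

open Finset

section

variable {V : Type*}

lemma clusterGraphOf_adj {C : Finset (Finset V)} {u v : V} :
    (clusterGraphOf C).Adj u v ↔ u ≠ v ∧ ∃ S ∈ C, u ∈ S ∧ v ∈ S := by
  simp only [clusterGraphOf, SimpleGraph.fromRel_adj]
  grind

noncomputable def restrictCover (t : Set V) (C : Finset (Finset V)) : Finset (Finset t) :=
  C.image (Finset.subtype (· ∈ t))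

noncomputable def addCluster (s : Set V) [Fintype s] (C : Finset (Finset ↥sᶜ)) :
    Finset (Finset V) :=
  insert s.toFinset (C.image (Finset.map (Function.Embedding.subtype _)))

lemma IsCovering.restrictCover {C : Finset (Finset V)} (hC : IsCovering C) (t : Set V) :
    IsCovering (restrictCover t C) := by
  intro x
  obtain ⟨S, hS, hx⟩ := hC x
  exact ⟨S.subtype _, mem_image_of_mem _ hS, mem_subtype.mpr hx⟩

lemma IsCovering.addCluster {s : Set V} [Fintype s] {C : Finset (Finset ↥sᶜ)}
    (hC : IsCovering C) : IsCovering (addCluster s C) := by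
  intro v
  by_cases hv : v ∈ s
  · exact ⟨s.toFinset, mem_insert_self _ _, Set.mem_toFinset.mpr hv⟩
  · obtain ⟨T, hT, hvT⟩ := hC ⟨v, hv⟩
    exact ⟨_, mem_insert_of_mem (mem_image_of_mem _ hT), mem_map_of_mem _ hvT⟩

lemma clusterGraphOf_restrictCover (t : Set V) (C : Finset (Finset V)) :
    clusterGraphOf (restrictCover t C) = (clusterGraphOf C).induce t := by
  ext x y
  simp only [SimpleGraph.induce_adj, clusterGraphOf_adj, restrictCover, exists_mem_image,
    mem_subtype, ne_eq, Subtype.ext_iff]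

lemma clusterGraphOf_addCluster_induce (s : Set V) [Fintype s] (C : Finset (Finset ↥sᶜ)) :
    (clusterGraphOf (addCluster s C)).induce sᶜ = clusterGraphOf C := by
  ext ⟨x, hx⟩ ⟨y, hy⟩
  rw [Set.mem_compl_iff] at hx hy
  simp [clusterGraphOf_adj, addCluster, hx, hy]

lemma clusterGraphOf_addCluster_adj_of_mem {s : Set V} [Fintype s] (C : Finset (Finset ↥sᶜ))
    {u v : V} (hu : u ∈ s) :
    (clusterGraphOf (addCluster s C)).Adj u v ↔ u ≠ v ∧ v ∈ s := by
  simp [clusterGraphOf_adj, addCluster, hu]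

lemma adj_iff_of_mem_isolatedClique {G : SimpleGraph V} {s : Set V}
    (hcomp : ∀ u ∈ s, ∀ v : V, v ∈ s ↔ G.Reachable u v) (hclique : G.IsClique s)
    {u v : V} (hu : u ∈ s) : G.Adj u v ↔ u ≠ v ∧ v ∈ s :=
  ⟨fun h => ⟨h.ne, (hcomp u hu v).mpr h.reachable⟩, fun h => hclique hu h.2 h.1⟩

lemma card_filter_mem_restrictCover_le (t : Set V) (C : Finset (Finset V)) (x : t) :
    #((restrictCover t C).filter (x ∈ ·)) ≤ #(C.filter (x.1 ∈ ·)) :=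
  calc #((restrictCover t C).filter (x ∈ ·))
      ≤ #((C.filter (x.1 ∈ ·)).image (Finset.subtype (· ∈ t))) := by
        refine card_le_card fun T hT => ?_
        simp only [restrictCover, mem_filter, mem_image] at hT ⊢
        obtain ⟨⟨S, hS, rfl⟩, hx⟩ := hT
        exact ⟨S, ⟨hS, mem_subtype.mp hx⟩, rfl⟩
    _ ≤ #(C.filter (x.1 ∈ ·)) := card_image_le

lemma filter_mem_addCluster_of_mem {s : Set V} [Fintype s] (C : Finset (Finset ↥sᶜ)) {v : V}
    (hv : v ∈ s) :
    (addCluster s C).filter (v ∈ ·) = {s.toFinset} := by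
  ext S
  simp only [mem_filter, addCluster, mem_insert, mem_image, mem_singleton]
  constructor
  · rintro ⟨rfl | ⟨T, -, rfl⟩, hvS⟩
    · rfl
    · obtain ⟨⟨w, hw⟩, -, rfl⟩ := mem_map.mp hvS
      exact absurd hv hw
  · rintro rfl
    exact ⟨Or.inl rfl, Set.mem_toFinset.mpr hv⟩

lemma card_filter_mem_addCluster {s : Set V} [Fintype s] (C : Finset (Finset ↥sᶜ))
    (x : ↥sᶜ) :
    #((addCluster s C).filter (x.1 ∈ ·)) = #(C.filter (x ∈ ·)) := by
  have hfilter : (addCluster s C).filter (x.1 ∈ ·) =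
      (C.filter (x ∈ ·)).image (map (Function.Embedding.subtype _)) := by
    ext S
    simp only [mem_filter, addCluster, mem_insert, mem_image]
    constructor
    · rintro ⟨rfl | ⟨T, hT, rfl⟩, hxS⟩
      · exact absurd (Set.mem_toFinset.mp hxS) x.2
      · exact ⟨T, ⟨hT, (mem_map' _).mp hxS⟩, rfl⟩
    · rintro ⟨T, ⟨hT, hxT⟩, rfl⟩
      exact ⟨Or.inr ⟨T, hT, rfl⟩, mem_map_of_mem _ hxT⟩
  rw [hfilter, card_image_of_injective _ (map_injective _)]

section Cost

variable [Fintype V]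

lemma editDiff_induce_le (G H : SimpleGraph V) (t : Set V) [Fintype t] :
    editDiff (G.induce t) (H.induce t) ≤ editDiff G H := by
  refine card_le_card_of_injOn (Sym2.map Subtype.val) ?_
    (Sym2.map.injective Subtype.val_injective).injOn
  intro e he
  induction e with
  | _ x y => simpa [SimpleGraph.mem_edgeSet] using he

lemma editDiff_induce_of_adj_iff {G H : SimpleGraph V} {t : Set V} [Fintype t]
    (hGH : ∀ u v, u ∉ t → (G.Adj u v ↔ H.Adj u v)) :
    editDiff (G.induce t) (H.induce t) = editDiff G H := by
  refine (editDiff_induce_le G H t).antisymm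
    (card_le_card_of_surjOn (Sym2.map Subtype.val) ?_)
  intro e he
  have mem_of_ne :
      ∀ a b, (G.Adj a b ∧ ¬H.Adj a b) ∨ (¬G.Adj a b ∧ H.Adj a b) → a ∈ t := by
    intro a b hab
    by_contra ha
    have := hGH a b ha
    tauto
  induction e with
  | _ u v =>
    simp only [coe_filter, mem_univ, true_and] at he
    have hu := mem_of_ne u v he
    have hv := mem_of_ne v u (by rwa [G.adj_comm, H.adj_comm])
    exact ⟨s(⟨u, hu⟩, ⟨v, hv⟩), by simpa [SimpleGraph.mem_edgeSet] using he, rfl⟩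

lemma splitCost_restrictCover_le (t : Set V) [Fintype t] (C : Finset (Finset V)) :
    splitCost (restrictCover t C) ≤ splitCost C :=
  calc splitCost (restrictCover t C)
      ≤ ∑ x : t, (#(C.filter (x.1 ∈ ·)) - 1) :=
        -- `convert`: the membership test on `Finset t` inside `splitCost` is the classical one,
        -- not the one coming from `Subtype`'s `DecidableEq`.
        sum_le_sum fun x _ =>
          Nat.sub_le_sub_right (by convert card_filter_mem_restrictCover_le t C x) 1
    _ ≤ splitCost C := by
        rw [sum_set_coe (f := fun v => #(C.filter (v ∈ ·)) - 1)]
        exact sum_le_univ_sum_of_nonneg fun _ => Nat.zero_le _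

lemma splitCost_addCluster (s : Set V) [Fintype s] [Fintype ↥sᶜ] (C : Finset (Finset ↥sᶜ)) :
    splitCost (addCluster s C) = splitCost C := by
  rw [splitCost, ← sum_add_sum_compl s.toFinset, ← Set.toFinset_compl,
    ← sum_set_coe, ← sum_set_coe, sum_eq_zero fun v _ => ?_, zero_add]
  · refine sum_congr rfl fun x _ => ?_
    rw [card_filter_mem_addCluster]
    congr!
  · rw [filter_mem_addCluster_of_mem C v.2]
    rfl

lemma cevsCost_restrictCover_le (G : SimpleGraph V) (t : Set V) [Fintype t]
    (C : Finset (Finset V)) :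
    cevsCost (G.induce t) (restrictCover t C) ≤ cevsCost G C := by
  rw [cevsCost, cevsCost, clusterGraphOf_restrictCover]
  exact add_le_add (splitCost_restrictCover_le t C) (editDiff_induce_le G _ t)

lemma cevsCost_addCluster {G : SimpleGraph V} {s : Set V} [Fintype s] [Fintype ↥sᶜ]
    (hcomp : ∀ u ∈ s, ∀ v : V, v ∈ s ↔ G.Reachable u v) (hclique : G.IsClique s)
    (C : Finset (Finset ↥sᶜ)) :
    cevsCost G (addCluster s C) = cevsCost (G.induce sᶜ) C := by
  rw [cevsCost, cevsCost, splitCost_addCluster, ← clusterGraphOf_addCluster_induce s C,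
    editDiff_induce_of_adj_iff]
  intro u v hu
  rw [Set.notMem_compl_iff] at hu
  rw [adj_iff_of_mem_isolatedClique hcomp hclique hu, clusterGraphOf_addCluster_adj_of_mem C hu]

end Cost

end

/-- Removing an isolated clique (a connected component `s` of `G` inducing a complete
graph) yields an equivalent CEVS instance: `(G, k)` is a yes-instance iff
`(G - s, k)` is. -/
theorem remove_isolated_clique {V : Type*} [Fintype V] (G : SimpleGraph V) (k : ℕ)
    (s : Set V) (hcomp : ∀ u ∈ s, ∀ v : V, v ∈ s ↔ G.Reachable u v)
    (hclique : G.IsClique s) :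
    CEVS G k ↔ CEVS (G.induce sᶜ) k := by
  constructor
  · rintro ⟨C, hC, hcost⟩
    exact ⟨restrictCover sᶜ C, hC.restrictCover sᶜ,
      (cevsCost_restrictCover_le G sᶜ C).trans hcost⟩
  · rintro ⟨C, hC, hcost⟩
    exact ⟨addCluster s C, hC.addCluster, (cevsCost_addCluster hcomp hclique C).trans_le hcost⟩
end

section
/- If every critical clique of G has at most k+1 vertices, every connected component of the critical clique graph CC(G) has at most 3k+1 critical cliques, and there are at most 4k non-isolated critical cliques, then G has at most 4k(k+1) vertices outside isolated cliques; hence the kernelization for CEVS (remove isolated cliques, truncate critical cliques to k+1 vertices, reject if more than 4k non-isolated critical cliques) produces an instance with at most 4k(k+1) vertices. -/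
open scoped Classical

namespace Finset

theorem card_filter_comp_le_mul {α β : Type*} [Fintype α] [Fintype β] [DecidableEq β]
    (f : α → β) (p : β → Prop) [DecidablePred p] (m : ℕ)
    (hfiber : ∀ b, #{a | f a = b} ≤ m) :
    #{a | p (f a)} ≤ m * #{b | p b} := by
  refine card_le_mul_card_image_of_maps_to (f := f) (t := {b | p b}) (by simp) m fun b _ => ?_
  calc #{a ∈ {a | p (f a)} | f a = b} ≤ #{a | f a = b} :=
        card_le_card (monotone_filter_left _ (subset_univ _))
    _ ≤ m := hfiber b

end Finset

theorem kernel_size_bound_general {V : Type*} [Fintype V] (G : SimpleGraph V) (k : ℕ)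
    (hsize : ∀ a : Quotient (ccSetoid G),
      (Finset.univ.filter (fun v : V => Quotient.mk (ccSetoid G) v = a)).card ≤ k + 1)
    (hnoniso : (Finset.univ.filter (fun a : Quotient (ccSetoid G) =>
        ∃ b, (ccGraph G).Adj a b)).card ≤ 4 * k) :
    (Finset.univ.filter (fun v : V =>
        ∃ b, (ccGraph G).Adj (Quotient.mk (ccSetoid G) v) b)).card
      ≤ 4 * k * (k + 1) :=
  calc _ ≤ (k + 1) * (4 * k) :=
        (Finset.card_filter_comp_le_mul _ (fun a => ∃ b, (ccGraph G).Adj a b) _ hsize).trans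
          (Nat.mul_le_mul_left _ hnoniso)
    _ = 4 * k * (k + 1) := Nat.mul_comm _ _

/-- Size bound of the kernel: if every critical clique of `G` has at most `k + 1`
vertices, every connected component of `CC(G)` has at most `3k + 1` critical cliques,
and there are at most `4k` non-isolated critical cliques, then `G` has at most
`4k(k + 1)` vertices outside isolated cliques (i.e. vertices whose critical clique is
a non-isolated vertex of `CC(G)`). -/
theorem kernel_size_bound {V : Type*} [Fintype V] (G : SimpleGraph V) (k : ℕ)
    (hsize : ∀ a : Quotient (ccSetoid G),
      (Finset.univ.filter (fun v : V => Quotient.mk (ccSetoid G) v = a)).card ≤ k + 1)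
    (hcomp : ∀ c : (ccGraph G).ConnectedComponent,
      (Finset.univ.filter (fun a : Quotient (ccSetoid G) =>
        (ccGraph G).connectedComponentMk a = c)).card ≤ 3 * k + 1)
    (hnoniso : (Finset.univ.filter (fun a : Quotient (ccSetoid G) =>
        ∃ b, (ccGraph G).Adj a b)).card ≤ 4 * k) :
    (Finset.univ.filter (fun v : V =>
        ∃ b, (ccGraph G).Adj (Quotient.mk (ccSetoid G) v) b)).card
      ≤ 4 * k * (k + 1) :=
  kernel_size_bound_general G k hsize hnoniso
end
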